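/- Let φ(t,·) be the regularizing diffeomorphism built from γ. Then the transformed normal vector N^φ = J((∂φ)^{-1})ᵀN̲ satisfies, at every point x̲(s) of the reference curve Γ̲: N^φ(t, x̲(s)) = (1 + κ(s)γ(t,s)) N̲(x̲(s)) − (∂_sγ)(t,s) N̲(x̲(s))^⊥, where κ is the curvature of Γ̲ and a^⊥ = (−a₂,a₁)ᵀ. -/

import Mathlib

noncomputable section
open MeasureTheory Set

abbrev E2 : Type := EuclideanSpace ℝ (Fin 2)

def e2 (i : Fin 2) : E2 := EuclideanSpace.single i 1
def vec (a b : ℝ) : E2 := WithLp.toLp 2 ![a, b]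
def perp (a : E2) : E2 := vec (-(a 1)) (a 0)
def pD (i : Fin 2) (f : E2 → ℝ) : E2 → ℝ := fun x => fderiv ℝ f x (e2 i)

def jac (Φ : E2 → E2) (x : E2) : Matrix (Fin 2) (Fin 2) ℝ :=
  Matrix.of fun i j => fderiv ℝ (fun y => Φ y i) x (e2 j)

/-- N^φ = J((∂φ)⁻¹)ᵀ N̲ (as a vector in ℝ²) -/
def NPvec (Φ : E2 → E2) (N : E2) (x : E2) : E2 :=
  vec ((jac Φ x).det * ((jac Φ x)⁻¹ 0 0 * N 0 + (jac Φ x)⁻¹ 1 0 * N 1))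
      ((jac Φ x).det * ((jac Φ x)⁻¹ 0 1 * N 0 + (jac Φ x)⁻¹ 1 1 * N 1))

/-- outward normal n̲(s) = −x̲'(s)^⊥ along the reference curve -/
def nb (xb : ℝ → E2) (s : ℝ) : E2 := vec (deriv xb s 1) (-(deriv xb s 0))

lemma E2_basis (v : E2) : v = v 0 • e2 0 + v 1 • e2 1 := by
  ext j
  fin_cases j <;> simp [e2, EuclideanSpace.single_apply, PiLp.add_apply, PiLp.smul_apply]

lemma comp_hasDerivAt {f : ℝ → E2} {s : ℝ} (hf : DifferentiableAt ℝ f s) (i : Fin 2) :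
    HasDerivAt (fun σ => f σ i) (deriv f s i) s :=
  (EuclideanSpace.proj (𝕜 := ℝ) i).hasFDerivAt.comp_hasDerivAt s hf.hasDerivAt

/-- for the regularizing diffeomorphism φ built from γ, the transformed
normal vector N^φ = J((∂φ)⁻¹)ᵀN̲ satisfies, at every point x̲(s) of Γ̲,
N^φ(t,x̲(s)) = (1 + κ(s)γ(t,s)) N̲(x̲(s)) − ∂_sγ(t,s) N̲(x̲(s))^⊥. -/
theorem transformed_normal_formula
    -- the reference curve, its curvature and its tubular neighborhood
    (L r0 : ℝ) (hL : 0 < L) (hr0 : 0 < r0)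
    (xb : ℝ → E2) (hxb : ContDiff ℝ (⊤ : ℕ∞) xb)
    (hper : ∀ s, xb (s + L) = xb s) (hinj : Set.InjOn xb (Ico 0 L))
    (hunit : ∀ s, (deriv xb s 0)^2 + (deriv xb s 1)^2 = 1)
    (κ : ℝ → ℝ) (hκ : ∀ s, deriv (deriv xb) s = κ s • perp (deriv xb s))
    (hr0κ : ∀ s, r0 * |κ s| < 1)
    -- the cut-off χ, equal to 1 near 0 with support in (−1,1)
    (χ : ℝ → ℝ) (hχreg : ContDiff ℝ (⊤ : ℕ∞) χ) (hχsupp : Function.support χ ⊆ Ioo (-1) 1)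
    (hχ1 : ∃ δ > 0, ∀ r, |r| < δ → χ r = 1)
    -- the contact-line parametrization γ and the smoothed extension γ^ext
    (γ : ℝ → ℝ → ℝ) (hγreg : ContDiff ℝ (⊤ : ℕ∞) (fun p : ℝ × ℝ => γ p.1 p.2))
    (hγper : ∀ t s, γ t (s + L) = γ t s)
    (γext : ℝ → ℝ → ℝ → ℝ)
    (hγextreg : ContDiff ℝ (⊤ : ℕ∞) (fun p : ℝ × ℝ × ℝ => γext p.1 p.2.1 p.2.2))
    -- in particular R(t,0,s) = γ(t,s) and (∂_rγ^ext)(t,0,s) = 0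
    (hγext0 : ∀ t s, γext t 0 s = γ t s)
    (hγextr : ∀ t s, deriv (fun r => γext t r s) 0 = 0)
    -- the regularizing diffeomorphism: φ = id off U_Γ̲ and
    -- φ(t,θ(r,s)) = x̲(s) + R(t,r,s)n̲(s), R = r + γ^ext χ(r/r₀), on U_Γ̲
    (φ : ℝ → E2 → E2) (hφreg : ContDiff ℝ (⊤ : ℕ∞) (fun p : ℝ × E2 => φ p.1 p.2))
    (hφoff : ∀ t y,
      (¬ ∃ r s, r ∈ Ioo (-r0) r0 ∧ y = xb s + r • nb xb s) → φ t y = y)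
    (hφon : ∀ t s, ∀ r ∈ Ioo (-r0) r0,
      φ t (xb s + r • nb xb s)
        = xb s + (r + γext t r s * χ (r / r0)) • nb xb s)
    -- φ(t,·) is a diffeomorphism (nonvanishing Jacobian determinant)
    (hJ : ∀ t x, (jac (φ t) x).det ≠ 0) :
    ∀ t s : ℝ,
      NPvec (φ t) (nb xb s) (xb s)
        = (1 + κ s * γ t s) • nb xb s - (deriv (γ t) s) • perp (nb xb s) := by
  intro t s
  obtain ⟨δ, hδ, hχδ⟩ := hχ1
  have hχ0 : χ 0 = 1 := hχδ 0 (by simpa using hδ)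
  -- φ restricted to the curve
  have h1 : ∀ σ : ℝ, φ t (xb σ) = xb σ + γ t σ • nb xb σ := by
    intro σ
    have h := hφon t σ 0 ⟨by linarith, hr0⟩
    simpa [hγext0, hχ0] using h
  -- differentiability
  have hxbD : Differentiable ℝ xb := hxb.differentiable (by simp)
  have hxb'D : Differentiable ℝ (deriv xb) := by
    have h2 : ContDiff ℝ ((⊤:ℕ∞) : WithTop ℕ∞) xb := hxb.of_le (by simp)
    exact ((contDiff_infty_iff_deriv.mp h2).2).differentiable (by simp)
  have hγtD : Differentiable ℝ (γ t) := by
    have h3 : ContDiff ℝ (⊤ : ℕ∞) (fun σ : ℝ => γ t σ) :=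
      hγreg.comp (contDiff_const.prodMk contDiff_id)
    exact h3.differentiable (by simp)
  have hφD : ∀ i : Fin 2, Differentiable ℝ (fun y : E2 => φ t y i) := by
    intro i
    have h4 : ContDiff ℝ (⊤ : ℕ∞) (φ t) := hφreg.comp (contDiff_const.prodMk contDiff_id)
    exact (EuclideanSpace.proj (𝕜 := ℝ) i).differentiable.comp (h4.differentiable (by simp))
  -- derivatives along the curve
  have hx0 : HasDerivAt (fun σ => xb σ 0) (deriv xb s 0) s := comp_hasDerivAt (hxbD s) 0
  have hx1 : HasDerivAt (fun σ => xb σ 1) (deriv xb s 1) s := comp_hasDerivAt (hxbD s) 1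
  have hdx : ∀ i : Fin 2, HasDerivAt (fun σ => deriv xb σ i) ((κ s • perp (deriv xb s)) i) s := by
    intro i
    have h := comp_hasDerivAt (hxb'D s) i
    rwa [hκ s] at h
  have hn0 : HasDerivAt (fun σ => nb xb σ 0) (κ s * deriv xb s 0) s := by
    have h := hdx 1
    simp only [nb, vec, perp, PiLp.smul_apply, smul_eq_mul, Matrix.cons_val_zero,
      Matrix.cons_val_one, Matrix.head_cons] at h ⊢
    exact h
  have hn1 : HasDerivAt (fun σ => nb xb σ 1) (κ s * deriv xb s 1) s := by
    have h := (hdx 0).neg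
    simp only [nb, vec, perp, PiLp.smul_apply, smul_eq_mul, Matrix.cons_val_zero,
      Matrix.cons_val_one, Matrix.head_cons, neg_neg, mul_neg] at h ⊢
    exact h
  have hγs : HasDerivAt (γ t) (deriv (γ t) s) s := (hγtD s).hasDerivAt
  -- the composite φ t ∘ xb, componentwise
  have hcompfun : ∀ i : Fin 2, (fun σ => φ t (xb σ) i) = fun σ => xb σ i + γ t σ * nb xb σ i := by
    intro i
    funext σ
    rw [h1 σ]
    simp [PiLp.add_apply, PiLp.smul_apply]
  have hV0 : HasDerivAt (fun σ => φ t (xb σ) 0)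
      (deriv xb s 0 * (1 + κ s * γ t s) + deriv (γ t) s * nb xb s 0) s := by
    rw [hcompfun 0]
    have h := hx0.add (hγs.mul hn0)
    have hval : nb xb s 0 = deriv xb s 1 := rfl
    refine h.congr_deriv ?_
    rw [hval]; ring
  have hV1 : HasDerivAt (fun σ => φ t (xb σ) 1)
      (deriv xb s 1 * (1 + κ s * γ t s) + deriv (γ t) s * nb xb s 1) s := by
    rw [hcompfun 1]
    have h := hx1.add (hγs.mul hn1)
    have hval : nb xb s 1 = -(deriv xb s 0) := rfl
    refine h.congr_deriv ?_
    rw [hval]; ring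
  -- chain rule value
  have hchain : ∀ i : Fin 2, HasDerivAt (fun σ => φ t (xb σ) i)
      (fderiv ℝ (fun y => φ t y i) (xb s) (deriv xb s)) s := by
    intro i
    have h := ((hφD i) (xb s)).hasFDerivAt.comp_hasDerivAt s (hxbD s).hasDerivAt
    exact h
  have key0 : fderiv ℝ (fun y => φ t y 0) (xb s) (deriv xb s)
      = deriv xb s 0 * (1 + κ s * γ t s) + deriv (γ t) s * nb xb s 0 :=
    (hchain 0).unique hV0
  have key1 : fderiv ℝ (fun y => φ t y 1) (xb s) (deriv xb s)
      = deriv xb s 1 * (1 + κ s * γ t s) + deriv (γ t) s * nb xb s 1 :=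
    (hchain 1).unique hV1
  -- express via the Jacobian matrix entries
  have hb : deriv xb s = deriv xb s 0 • e2 0 + deriv xb s 1 • e2 1 := E2_basis _
  have hlin : ∀ i : Fin 2, fderiv ℝ (fun y => φ t y i) (xb s) (deriv xb s)
      = jac (φ t) (xb s) i 0 * deriv xb s 0 + jac (φ t) (xb s) i 1 * deriv xb s 1 := by
    intro i
    conv_lhs => rw [hb]
    rw [map_add, _root_.map_smul, _root_.map_smul]
    simp [jac, Matrix.of_apply, smul_eq_mul]
    ring
  have hA0 : jac (φ t) (xb s) 0 0 * deriv xb s 0 + jac (φ t) (xb s) 0 1 * deriv xb s 1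
      = deriv xb s 0 * (1 + κ s * γ t s) + deriv (γ t) s * deriv xb s 1 := by
    have := (hlin 0).symm.trans key0
    simpa [nb, vec] using this
  have hA1 : jac (φ t) (xb s) 1 0 * deriv xb s 0 + jac (φ t) (xb s) 1 1 * deriv xb s 1
      = deriv xb s 1 * (1 + κ s * γ t s) - deriv (γ t) s * deriv xb s 0 := by
    have := (hlin 1).symm.trans key1
    have hval : nb xb s 1 = -(deriv xb s 0) := rfl
    rw [hval] at this
    linarith [this]
  -- the inverse matrix via the adjugate
  have hdet : (jac (φ t) (xb s)).det ≠ 0 := hJ t (xb s)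
  have hinv : ∀ i j : Fin 2, (jac (φ t) (xb s))⁻¹ i j
      = (jac (φ t) (xb s)).det⁻¹ * (jac (φ t) (xb s)).adjugate i j := by
    intro i j
    rw [Matrix.inv_def, Ring.inverse_eq_inv']
    simp [Matrix.smul_apply, smul_eq_mul]
  have hadj := Matrix.adjugate_fin_two (jac (φ t) (xb s))
  -- final componentwise computation
  ext j
  fin_cases j
  · show NPvec (φ t) (nb xb s) (xb s) 0
        = (1 + κ s * γ t s) * nb xb s 0 - deriv (γ t) s * perp (nb xb s) 0
    simp only [NPvec, vec, Matrix.cons_val_zero, PiLp.sub_apply, PiLp.smul_apply, smul_eq_mul]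
    rw [hinv 0 0, hinv 1 0, hadj]
    simp only [Matrix.of_apply, Matrix.cons_val', Matrix.cons_val_zero, Matrix.empty_val',
      Matrix.cons_val_fin_one, Matrix.cons_val_one, Matrix.head_cons, Matrix.head_fin_const]
    have hn0v : nb xb s 0 = deriv xb s 1 := rfl
    have hn1v : nb xb s 1 = -(deriv xb s 0) := rfl
    have hp0 : perp (nb xb s) 0 = deriv xb s 0 := by simp [perp, nb, vec]
    rw [hn0v, hn1v, hp0]
    field_simp
    linear_combination hA1
  · show NPvec (φ t) (nb xb s) (xb s) 1
        = (1 + κ s * γ t s) * nb xb s 1 - deriv (γ t) s * perp (nb xb s) 1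
    simp only [NPvec, vec, Matrix.cons_val_one, Matrix.head_cons, PiLp.sub_apply,
      PiLp.smul_apply, smul_eq_mul]
    rw [hinv 0 1, hinv 1 1, hadj]
    simp only [Matrix.of_apply, Matrix.cons_val', Matrix.cons_val_zero, Matrix.empty_val',
      Matrix.cons_val_fin_one, Matrix.cons_val_one, Matrix.head_cons, Matrix.head_fin_const]
    have hn0v : nb xb s 0 = deriv xb s 1 := rfl
    have hn1v : nb xb s 1 = -(deriv xb s 0) := rfl
    have hp1 : perp (nb xb s) 1 = deriv xb s 1 := by simp [perp, nb, vec]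
    rw [hn0v, hn1v, hp1]
    field_simp
    linear_combination (-1 : ℝ) * hA0
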